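/- With the notation above, E[f_1^4 − 6·f_2^4 + 8·f_3^4 − 6·f_4^4 + 3·f_5^4] = l(l−1)(l−2)(l−3)·γ_b⁴. -/

import Mathlib

/-!
Multiplying out the power sums, `f₁ - 6 f₂ + 8 f₃ - 6 f₄ + 3 f₅` is exactly the sum of
`eᵢ eⱼ eₖ eₘ` over ordered 4-tuples of pairwise distinct indices (the Möbius inversion over set
partitions of the four positions). For distinct indices, expanding `∏ (b + εₜ)` one factor at a
time, every term carrying some `εₜ` is `εₜ` times a function of `b` and the other `ε`'s, hence has
mean zero by independence; only `E[b⁴]` survives. There are `l (l-1) (l-2) (l-3)` such tuples.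
-/

open MeasureTheory ProbabilityTheory Finset
open scoped ENNReal

section

variable {ι R : Type*} [DecidableEq ι]

def sumDistinct4 [AddCommMonoid R] (s : Finset ι) (F : ι → ι → ι → ι → R) : R :=
  ∑ i ∈ s, ∑ j ∈ s.erase i, ∑ k ∈ (s.erase i).erase j, ∑ m ∈ ((s.erase i).erase j).erase k,
    F i j k m

lemma nodup_four_of_mem_erase {s : Finset ι} {i j k m : ι} (hj : j ∈ s.erase i)
    (hk : k ∈ (s.erase i).erase j) (hm : m ∈ ((s.erase i).erase j).erase k) :
    [i, j, k, m].Nodup := by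
  simp only [mem_erase] at hj hk hm
  simp only [List.nodup_cons, List.mem_cons, List.not_mem_nil, List.nodup_nil]
  tauto

lemma sumDistinct4_congr [AddCommMonoid R] {s : Finset ι} {F G : ι → ι → ι → ι → R}
    (h : ∀ i j k m, [i, j, k, m].Nodup → F i j k m = G i j k m) :
    sumDistinct4 s F = sumDistinct4 s G := by
  unfold sumDistinct4
  refine sum_congr rfl fun i _ => sum_congr rfl fun j hj => sum_congr rfl fun k hk =>
    sum_congr rfl fun m hm => h i j k m (nodup_four_of_mem_erase hj hk hm)

lemma sumDistinct4_mul_eq_powerSums [CommRing R] (s : Finset ι) (x : ι → R) :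
    sumDistinct4 s (fun i j k m => x i * x j * x k * x m)
      = (∑ i ∈ s, x i) ^ 4 - 6 * (∑ i ∈ s, x i ^ 2) * (∑ i ∈ s, x i) ^ 2
        + 8 * (∑ i ∈ s, x i ^ 3) * (∑ i ∈ s, x i)
        - 6 * (∑ i ∈ s, x i ^ 4) + 3 * (∑ i ∈ s, x i ^ 2) ^ 2 := by
  unfold sumDistinct4
  set p1 := ∑ i ∈ s, x i with hp1
  set p2 := ∑ i ∈ s, x i ^ 2 with hp2
  set p3 := ∑ i ∈ s, x i ^ 3 with hp3
  set p4 := ∑ i ∈ s, x i ^ 4 with hp4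
  have S1 : ∀ {t : Finset ι} {a : ι}, a ∈ t → ∑ m ∈ t.erase a, x m = ∑ m ∈ t, x m - x a :=
    sum_erase_eq_sub
  have S2 : ∀ {t : Finset ι} {a : ι}, a ∈ t →
      ∑ m ∈ t.erase a, x m ^ 2 = ∑ m ∈ t, x m ^ 2 - x a ^ 2 := sum_erase_eq_sub
  have S3 : ∀ {t : Finset ι} {a : ι}, a ∈ t →
      ∑ m ∈ t.erase a, x m ^ 3 = ∑ m ∈ t, x m ^ 3 - x a ^ 3 := sum_erase_eq_sub
  calc
    ∑ i ∈ s, ∑ j ∈ s.erase i, ∑ k ∈ (s.erase i).erase j,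
        ∑ m ∈ ((s.erase i).erase j).erase k, x i * x j * x k * x m
      = ∑ i ∈ s, ∑ j ∈ s.erase i, ∑ k ∈ (s.erase i).erase j,
          ((x i * x j * (p1 - x i - x j)) * x k + (-(x i * x j)) * x k ^ 2) := by
        refine sum_congr rfl fun i hi => ?_
        refine sum_congr rfl fun j hj => ?_
        refine sum_congr rfl fun k hk => ?_
        rw [← mul_sum, S1 hk, S1 hj, S1 hi, ← hp1]
        ring
    _ = ∑ i ∈ s, ∑ j ∈ s.erase i,
          ((x i * (p1 - x i) ^ 2 - x i * (p2 - x i ^ 2)) * x j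
            + (-(2 * x i * (p1 - x i))) * x j ^ 2 + (2 * x i) * x j ^ 3) := by
        refine sum_congr rfl fun i hi => ?_
        refine sum_congr rfl fun j hj => ?_
        rw [sum_add_distrib, ← mul_sum, ← mul_sum,
          S1 hj, S1 hi, S2 hj, S2 hi, ← hp1, ← hp2]
        ring
    _ = ∑ i ∈ s, ((p1 ^ 3 - 3 * p1 * p2 + 2 * p3) * x i + (3 * p2 - 3 * p1 ^ 2) * x i ^ 2
          + (6 * p1) * x i ^ 3 + (-6) * x i ^ 4) := by
        refine sum_congr rfl fun i hi => ?_
        rw [sum_add_distrib, sum_add_distrib, ← mul_sum, ← mul_sum,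
          ← mul_sum, S1 hi, S2 hi, S3 hi, ← hp1, ← hp2, ← hp3]
        ring
    _ = (p1 ^ 3 - 3 * p1 * p2 + 2 * p3) * p1 + (3 * p2 - 3 * p1 ^ 2) * p2
          + (6 * p1) * p3 + (-6) * p4 := by
        rw [sum_add_distrib, sum_add_distrib, sum_add_distrib,
          ← mul_sum, ← mul_sum, ← mul_sum, ← mul_sum,
          ← hp1, ← hp2, ← hp3, ← hp4]
    _ = p1 ^ 4 - 6 * p2 * p1 ^ 2 + 8 * p3 * p1 - 6 * p4 + 3 * p2 ^ 2 := by ring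

lemma mul_four_eq_prod_toFinset [CommMonoid R] (f : ι → R) {i j k m : ι}
    (h : [i, j, k, m].Nodup) : f i * f j * f k * f m = ∏ t ∈ [i, j, k, m].toFinset, f t := by
  rw [List.prod_toFinset f h]; simp [mul_assoc]

lemma sumDistinct4_const [CommRing R] (s : Finset ι) (c : R) :
    sumDistinct4 s (fun _ _ _ _ => c) = #s * (#s - 1) * (#s - 2) * (#s - 3) * c := by
  simp +contextual [sumDistinct4, -card_erase_of_mem, cast_card_erase_of_mem]
  ring

lemma integral_sumDistinct4 {Ω E : Type*} [MeasurableSpace Ω] {μ : Measure Ω}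
    [NormedAddCommGroup E] [NormedSpace ℝ E] (s : Finset ι) {F : ι → ι → ι → ι → Ω → E}
    (hF : ∀ i j k m, [i, j, k, m].Nodup → Integrable (F i j k m) μ) :
    ∫ ω, sumDistinct4 s (fun i j k m => F i j k m ω) ∂μ
      = sumDistinct4 s (fun i j k m => ∫ ω, F i j k m ω ∂μ) := by
  have hF' : ∀ i ∈ s, ∀ j ∈ s.erase i, ∀ k ∈ (s.erase i).erase j,
      ∀ m ∈ ((s.erase i).erase j).erase k, Integrable (F i j k m) μ :=
    fun i _ j hj k hk m hm => hF i j k m (nodup_four_of_mem_erase hj hk hm)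
  simp only [sumDistinct4]
  rw [integral_finsetSum _ fun i hi => integrable_finsetSum _ fun j hj =>
    integrable_finsetSum _ fun k hk => integrable_finsetSum _ (hF' i hi j hj k hk)]
  refine sum_congr rfl fun i hi => ?_
  rw [integral_finsetSum _ fun j hj =>
    integrable_finsetSum _ fun k hk => integrable_finsetSum _ (hF' i hi j hj k hk)]
  refine sum_congr rfl fun j hj => ?_
  rw [integral_finsetSum _ fun k hk => integrable_finsetSum _ (hF' i hi j hj k hk)]
  exact sum_congr rfl fun k hk => integral_finsetSum _ (hF' i hi j hj k hk)

end

lemma ENNReal.holderTriple_natCast_div {n : ℕ} (hn : n ≠ 0) (j k : ℕ) :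
    HolderTriple (n / j) (n / k) (n / (j + k : ℕ)) where
  inv_add_inv_eq_inv := by
    simp only [ENNReal.inv_div (Or.inr (ENNReal.natCast_ne_top n)) (Or.inr (Nat.cast_ne_zero.2 hn)),
      Nat.cast_add]
    exact ENNReal.div_add_div_same

section

variable {Ω ι : Type*} [MeasurableSpace Ω] {μ : Measure Ω}

lemma memLp_of_integrable_pow {f : Ω → ℝ} {n : ℕ} (hn : n ≠ 0) (hn_even : Even n)
    (hf : AEStronglyMeasurable f μ) (hfn : Integrable (fun ω => f ω ^ n) μ) : MemLp f n μ := by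
  rw [← integrable_norm_rpow_iff hf (by simpa) (by simp)]
  simpa [Real.norm_eq_abs, hn_even.pow_abs] using hfn

variable {b : Ω → ℝ} {ε : ι → Ω → ℝ} {n : ℕ}

lemma memLp_pow_mul_prod_add (hn : n ≠ 0) (hb : MemLp b n μ) (hε : ∀ i, MemLp (ε i) n μ)
    (a : ℕ) (T : Finset ι) :
    MemLp (fun ω => b ω ^ a * ∏ t ∈ T, (b ω + ε t ω)) (n / (a + #T : ℕ)) μ := by
  classical
  have hb' : MemLp b (n / (1 : ℕ)) μ := by simpa using hb
  induction T using Finset.induction_on with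
  | empty =>
    induction a with
    | zero =>
      simpa [ENNReal.div_zero (Nat.cast_ne_zero.2 hn)] using memLp_top_const (μ := μ) (1 : ℝ)
    | succ a ih =>
      convert ih.mul' hb' (hpqr := ENNReal.holderTriple_natCast_div hn 1 a) using 2
      · simp [pow_succ']
      · simp [add_comm]
  | insert t T ht ih =>
    have hbε : MemLp (fun ω => b ω + ε t ω) (n / (1 : ℕ)) μ := by
      rw [Nat.cast_one, div_one]; exact hb.add (hε t)
    convert ih.mul' hbε (hpqr := ENNReal.holderTriple_natCast_div hn 1 (a + #T)) using 2
    · rw [prod_insert ht]; ring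
    · rw [card_insert_of_notMem ht, add_comm 1, add_assoc]

lemma indepFun_pow_mul_prod_add (hind : iIndepFun (fun i : Option ι => Option.elim i b ε) μ)
    (hb : AEMeasurable b μ) (hε : ∀ i, AEMeasurable (ε i) μ) {T : Finset ι} {t : ι} (ht : t ∉ T)
    (a : ℕ) : IndepFun (fun ω => b ω ^ a * ∏ s ∈ T, (b ω + ε s ω)) (ε t) μ := by
  have hST : Disjoint T.insertNone {some t} := by simpa using ht
  have h := hind.indepFun_finset₀ _ _ hST (by rintro (_ | i); exacts [hb, hε i])
  have hnone : none ∈ T.insertNone := by simp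
  let φ : (T.insertNone → ℝ) → ℝ := fun v =>
    v ⟨none, hnone⟩ ^ a * ∏ s ∈ T.attach, (v ⟨none, hnone⟩ + v ⟨some s, by simp⟩)
  let ψ : (({some t} : Finset (Option ι)) → ℝ) → ℝ := fun v => v ⟨some t, by simp⟩
  have hφ : Measurable φ := by fun_prop
  have hψ : Measurable ψ := measurable_pi_apply _
  convert h.comp hφ hψ using 1
  · ext ω
    simp [φ, prod_attach T fun s => b ω + ε s ω]
  · rfl

lemma integrable_pow_mul_prod_add (hn : n ≠ 0) (hb : MemLp b n μ) (hε : ∀ i, MemLp (ε i) n μ)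
    {a : ℕ} {T : Finset ι} (haT : a + #T = n) :
    Integrable (fun ω => b ω ^ a * ∏ t ∈ T, (b ω + ε t ω)) μ := by
  subst haT
  rw [← memLp_one_iff_integrable,
    ← ENNReal.div_self (Nat.cast_ne_zero.2 hn) (ENNReal.natCast_ne_top _)]
  exact memLp_pow_mul_prod_add hn hb hε a T

lemma integrable_mul_four_of_nodup [DecidableEq ι] (hb : MemLp b 4 μ)
    (hε : ∀ i, MemLp (ε i) 4 μ) {i j k m : ι} (h : [i, j, k, m].Nodup) :
    Integrable (fun ω => (b ω + ε i ω) * (b ω + ε j ω) * (b ω + ε k ω) * (b ω + ε m ω)) μ := by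
  have := integrable_pow_mul_prod_add four_ne_zero hb hε (a := 0) (T := [i, j, k, m].toFinset)
    (by rw [zero_add, List.toFinset_card_of_nodup h]; rfl)
  simpa only [pow_zero, one_mul, ← mul_four_eq_prod_toFinset _ h] using this

theorem integral_pow_mul_prod_add (hind : iIndepFun (fun i : Option ι => Option.elim i b ε) μ)
    (hε0 : ∀ i, ∫ ω, ε i ω ∂μ = 0) (hn : n ≠ 0) (hb : MemLp b n μ) (hε : ∀ i, MemLp (ε i) n μ)
    (T : Finset ι) (a : ℕ) (haT : a + #T = n) :
    ∫ ω, b ω ^ a * ∏ t ∈ T, (b ω + ε t ω) ∂μ = ∫ ω, b ω ^ n ∂μ := by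
  classical
  induction T using Finset.induction_on generalizing a with
  | empty => simp_all
  | insert t T ht ih =>
    rw [card_insert_of_notMem ht] at haT
    set Y := fun ω => b ω ^ a * ∏ s ∈ T, (b ω + ε s ω)
    have hsplit : ∀ ω, b ω ^ a * ∏ s ∈ insert t T, (b ω + ε s ω)
        = b ω ^ (a + 1) * ∏ s ∈ T, (b ω + ε s ω) + ε t ω * Y ω := by
      intro ω; rw [prod_insert ht]; ring
    have hmain := integrable_pow_mul_prod_add hn hb hε (a := a + 1) (T := T) (by omega)
    have hcross_int : Integrable (fun ω => ε t ω * Y ω) μ := by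
      refine ((integrable_pow_mul_prod_add hn hb hε (a := a) (T := insert t T)
        (by rw [card_insert_of_notMem ht]; omega)).sub hmain).congr (ae_of_all _ fun ω => ?_)
      simp only [Pi.sub_apply, hsplit]; ring
    have hcross : ∫ ω, ε t ω * Y ω ∂μ = 0 := by
      have hindep := indepFun_pow_mul_prod_add hind hb.aemeasurable
        (fun i => (hε i).aemeasurable) ht a
      rw [hindep.symm.integral_fun_mul_eq_mul_integral (hε t).aestronglyMeasurable
        (memLp_pow_mul_prod_add hn hb hε a T).aestronglyMeasurable, hε0, zero_mul]
    simp_rw [hsplit]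
    rw [integral_add hmain hcross_int, hcross, add_zero, ih (a + 1) (by omega)]

theorem integral_mul_four_of_nodup [DecidableEq ι]
    (hind : iIndepFun (fun i : Option ι => Option.elim i b ε) μ) (hε0 : ∀ i, ∫ ω, ε i ω ∂μ = 0)
    (hb : MemLp b 4 μ) (hε : ∀ i, MemLp (ε i) 4 μ)
    {i j k m : ι} (h : [i, j, k, m].Nodup) :
    ∫ ω, (b ω + ε i ω) * (b ω + ε j ω) * (b ω + ε k ω) * (b ω + ε m ω) ∂μ = ∫ ω, b ω ^ 4 ∂μ := by
  have := integral_pow_mul_prod_add hind hε0 four_ne_zero hb hε [i, j, k, m].toFinset 0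
    (by rw [zero_add, List.toFinset_card_of_nodup h]; rfl)
  simpa only [pow_zero, one_mul, ← mul_four_eq_prod_toFinset _ h] using this

end

theorem fourth_moment_b_combination_general
    {l : ℕ}
    {Ω : Type*} [MeasureSpace Ω]
    (b : Ω → ℝ) (ε : Fin l → Ω → ℝ)
    (hbmeas : Measurable b) (hεmeas : ∀ j, Measurable (ε j))
    (hindep : ProbabilityTheory.iIndepFun
      (fun i : Option (Fin l) => Option.elim i b ε) ℙ)
    (hεmean : ∀ j, ∫ ω, ε j ω = 0)
    (hεint4 : ∀ j, Integrable (fun ω => (ε j ω) ^ 4) ℙ)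
    (hbint4 : Integrable (fun ω => (b ω) ^ 4) ℙ)
    (γb4 : ℝ)
    (hb4 : ∫ ω, (b ω) ^ 4 = γb4) :
    ∫ ω, ((∑ j, (b ω + ε j ω)) ^ 4
          - 6 * (∑ j, (b ω + ε j ω) ^ 2) * (∑ j, (b ω + ε j ω)) ^ 2
          + 8 * (∑ j, (b ω + ε j ω) ^ 3) * (∑ j, (b ω + ε j ω))
          - 6 * ∑ j, (b ω + ε j ω) ^ 4
          + 3 * (∑ j, (b ω + ε j ω) ^ 2) ^ 2)
      = (l : ℝ) * ((l : ℝ) - 1) * ((l : ℝ) - 2) * ((l : ℝ) - 3) * γb4 := by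
  have hb : MemLp b 4 ℙ :=
    memLp_of_integrable_pow four_ne_zero ⟨2, rfl⟩ hbmeas.aestronglyMeasurable hbint4
  have hε : ∀ j, MemLp (ε j) 4 ℙ := fun j =>
    memLp_of_integrable_pow four_ne_zero ⟨2, rfl⟩ (hεmeas j).aestronglyMeasurable (hεint4 j)
  calc _ = ∫ ω, sumDistinct4 univ fun i j k m =>
          (b ω + ε i ω) * (b ω + ε j ω) * (b ω + ε k ω) * (b ω + ε m ω) := by
        simp_rw [sumDistinct4_mul_eq_powerSums]
    _ = sumDistinct4 univ fun i j k m =>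
          ∫ ω, (b ω + ε i ω) * (b ω + ε j ω) * (b ω + ε k ω) * (b ω + ε m ω) :=
        integral_sumDistinct4 _ fun _ _ _ _ h => integrable_mul_four_of_nodup hb hε h
    _ = sumDistinct4 univ fun _ _ _ _ => γb4 :=
        sumDistinct4_congr fun _ _ _ _ h =>
          (integral_mul_four_of_nodup hindep hεmean hb hε h).trans hb4
    _ = _ := by rw [sumDistinct4_const, card_univ, Fintype.card_fin]

/-- the combination of f_1^4,...,f_5^4 isolating the fourth moment of b. -/
theorem fourth_moment_b_combination
    {l : ℕ} (hl : 4 ≤ l)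
    {Ω : Type*} [MeasureSpace Ω] [IsProbabilityMeasure (ℙ : Measure Ω)]
    (b : Ω → ℝ) (ε : Fin l → Ω → ℝ)
    (hbmeas : Measurable b) (hεmeas : ∀ j, Measurable (ε j))
    (hindep : ProbabilityTheory.iIndepFun
      (fun i : Option (Fin l) => Option.elim i b ε) ℙ)
    (hident : ∀ j j' : Fin l, Measure.map (ε j) ℙ = Measure.map (ε j') ℙ)
    (hεmean : ∀ j, ∫ ω, ε j ω = 0)
    (hεint4 : ∀ j, Integrable (fun ω => (ε j ω) ^ 4) ℙ)
    (hbint4 : Integrable (fun ω => (b ω) ^ 4) ℙ)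
    (hbmean : ∫ ω, b ω = 0)
    (γb4 : ℝ)
    (hb4 : ∫ ω, (b ω) ^ 4 = γb4) :
    ∫ ω, ((∑ j, (b ω + ε j ω)) ^ 4
          - 6 * (∑ j, (b ω + ε j ω) ^ 2) * (∑ j, (b ω + ε j ω)) ^ 2
          + 8 * (∑ j, (b ω + ε j ω) ^ 3) * (∑ j, (b ω + ε j ω))
          - 6 * ∑ j, (b ω + ε j ω) ^ 4
          + 3 * (∑ j, (b ω + ε j ω) ^ 2) ^ 2)
      = (l : ℝ) * ((l : ℝ) - 1) * ((l : ℝ) - 2) * ((l : ℝ) - 3) * γb4 :=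
  fourth_moment_b_combination_general b ε hbmeas hεmeas hindep hεmean hεint4 hbint4 γb4 hb4
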